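/- arXiv:1110.3055 — 5 statements merged into one kernel-verified Lean document; each statement's English description precedes it below -/
import Mathlib

section
/- The composition of two CP-style morphisms is again a CP-style morphism: if f : A → B ⊗ C and g : B → D ⊗ E are morphisms in a dagger symmetric monoidal category C, then the composite (g† ⊗ id)(id ⊗ σ)(g ⊗ id) ∘ (f† ⊗ id)(id ⊗ σ)(f ⊗ id) (with appropriate type matching on the B components) equals (h† ⊗ id)(id ⊗ σ)(h ⊗ id) for the Kraus morphism h = (id ⊗ g)f : A → D ⊗ (E ⊗ C), up to associativity coherence isomorphisms. -/
open CategoryTheory MonoidalCategory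

universe v u

/-- A dagger structure on a category. -/
class Dagger (C : Type u) [Category.{v} C] where
  dag : ∀ {X Y : C}, (X ⟶ Y) → (Y ⟶ X)
  dag_dag : ∀ {X Y : C} (f : X ⟶ Y), dag (dag f) = f
  dag_id : ∀ X : C, dag (𝟙 X) = 𝟙 X
  dag_comp : ∀ {X Y Z : C} (f : X ⟶ Y) (g : Y ⟶ Z), dag (f ≫ g) = dag g ≫ dag f

open Dagger

/-- A dagger symmetric monoidal category. -/
class DaggerSMC (C : Type u) [Category.{v} C] [MonoidalCategory C] [SymmetricCategory C]
    extends Dagger C where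
  dag_tensor : ∀ {X Y X' Y' : C} (f : X ⟶ Y) (g : X' ⟶ Y'), dag (f ⊗ₘ g) = dag f ⊗ₘ dag g
  dag_assoc : ∀ X Y Z : C, dag (α_ X Y Z).hom = (α_ X Y Z).inv
  dag_left : ∀ X : C, dag (λ_ X).hom = (λ_ X).inv
  dag_right : ∀ X : C, dag (ρ_ X).hom = (ρ_ X).inv
  dag_braid : ∀ X Y : C, dag (β_ X Y).hom = (β_ X Y).inv

variable {C : Type u} [Category.{v} C] [MonoidalCategory C] [SymmetricCategory C] [DaggerSMC C]

/-- The CP-form `(f† ⊗ id)(id ⊗ σ)(f ⊗ id)` of a Kraus morphism `f : A ⟶ X ⊗ B`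
(ancillary system `X`), written with coherence isomorphisms inserted. -/
def CPform {A B X : C} (f : A ⟶ X ⊗ B) : A ⊗ B ⟶ A ⊗ B :=
  (f ▷ B) ≫ (α_ X B B).hom ≫ (X ◁ (β_ B B).hom) ≫ (α_ X B B).inv ≫ (dag f ▷ B)

/-- The composition in `CP(C)` of the CP-form of `f : A ⟶ X ⊗ B` with the CP-form of
`g : B ⟶ D ⊗ E`, given by the composition diagram of the CP-construction. -/
def CPcomp {A B X D E : C} (f : A ⟶ X ⊗ B) (g : B ⟶ D ⊗ E) : A ⊗ E ⟶ A ⊗ E :=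
  (f ▷ E) ≫ (α_ X B E).hom ≫ (X ◁ (g ▷ E)) ≫ (X ◁ (α_ D E E).hom) ≫
    (X ◁ (D ◁ (β_ E E).hom)) ≫ (X ◁ (α_ D E E).inv) ≫ (X ◁ (dag g ▷ E)) ≫
    (α_ X B E).inv ≫ (dag f ▷ E)

/-! The dagger of the composite Kraus morphism `h = f ≫ (X ◁ g) ≫ α⁻¹` is the reversed composite
`α ≫ (X ◁ g†) ≫ f†`. Substituting it into the CP-form of `h`, the two sides differ only in how the
associators around the swap `β_ E E` are bracketed, so they agree by monoidal coherence. -/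

lemma dag_whiskerLeft (X : C) {Y Z : C} (f : Y ⟶ Z) : dag (X ◁ f) = X ◁ dag f := by
  rw [← id_tensorHom, DaggerSMC.dag_tensor, dag_id, id_tensorHom]

lemma dag_assoc_inv (X Y Z : C) : dag (α_ X Y Z).inv = (α_ X Y Z).hom := by
  rw [← DaggerSMC.dag_assoc, dag_dag]

lemma dag_comp_whiskerLeft_comp_assoc_inv {A B X D E : C} (f : A ⟶ X ⊗ B) (g : B ⟶ D ⊗ E) :
    dag (f ≫ (X ◁ g) ≫ (α_ X D E).inv) = (α_ X D E).hom ≫ (X ◁ dag g) ≫ dag f := by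
  rw [dag_comp, dag_comp, dag_assoc_inv, dag_whiskerLeft, Category.assoc]

/-- The composite of two CP-style morphisms is again a CP-style morphism, namely the
CP-form of the Kraus morphism `h = (id ⊗ g) ∘ f` (up to associativity coherence). -/
theorem cp_comp_is_cp_form {A B X D E : C} (f : A ⟶ X ⊗ B) (g : B ⟶ D ⊗ E) :
    CPcomp f g = CPform (f ≫ (X ◁ g) ≫ (α_ X D E).inv) := by
  rw [CPform, dag_comp_whiskerLeft_comp_assoc_inv]
  simp only [CPcomp, comp_whiskerRight, Category.assoc]
  monoidal
end

section
/- The tensor product of two CP-forms is a CP-form: given Kraus morphisms f : A → C ⊗ B and g : A' → C' ⊗ B', there exists a Kraus morphism h : A ⊗ A' → (C ⊗ C') ⊗ (B ⊗ B') such that the CP-form of h equals, up to symmetry and associativity coherence isomorphisms, the tensor (interleaved appropriately) of the CP-forms of f and g. Consequently CP(C) is a symmetric monoidal category. -/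
open CategoryTheory MonoidalCategory

universe v u

open Dagger

variable {C : Type u} [Category.{v} C] [MonoidalCategory C] [SymmetricCategory C] [DaggerSMC C]

/-!
Take `h = (f ⊗ g) ≫ tensorμ`, so that `h† = tensorδ ≫ (f† ⊗ g†)`. By naturality of `tensorμ`
the Kraus maps slide through the interchange, and what remains is a coherence statement: the
interchange conjugates the pair of swaps `σ_B, σ_B'` into the swap `σ_{B ⊗ B'}`. This holds in
any braided category once `σ_{B ⊗ B'}` and `σ_B ⊗ σ_B'` agree under the middle interchange, which
is where the symmetry is used.
-/

namespace DaggerSMC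

theorem dag_whiskerLeft (X : C) {Y Z : C} (f : Y ⟶ Z) : dag (X ◁ f) = X ◁ dag f := by
  rw [← id_tensorHom, dag_tensor, dag_id, id_tensorHom]

theorem dag_whiskerRight {Y Z : C} (f : Y ⟶ Z) (X : C) : dag (f ▷ X) = dag f ▷ X := by
  rw [← tensorHom_id, dag_tensor, dag_id, tensorHom_id]

theorem dag_assoc_inv (X Y Z : C) : dag (α_ X Y Z).inv = (α_ X Y Z).hom := by
  rw [← dag_assoc, dag_dag]

theorem dag_tensorμ (X₁ X₂ Y₁ Y₂ : C) : dag (tensorμ X₁ X₂ Y₁ Y₂) = tensorδ X₁ X₂ Y₁ Y₂ := by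
  simp only [tensorμ, tensorδ, dag_comp, dag_whiskerLeft, dag_whiskerRight, dag_assoc,
    dag_assoc_inv, dag_braid, Category.assoc]

end DaggerSMC

section Braided

variable {D : Type*} [Category D] [MonoidalCategory D] [BraidedCategory D]

def whiskerLeftAssoc (X : D) {Y Z Y' Z' : D} (φ : Y ⊗ Z ⟶ Y' ⊗ Z') :
    (X ⊗ Y) ⊗ Z ⟶ (X ⊗ Y') ⊗ Z' :=
  (α_ X Y Z).hom ≫ X ◁ φ ≫ (α_ X Y' Z').inv

theorem whiskerLeftAssoc_tensorHom_comp_tensorμ {X₁ X₂ X₃ Y₁ Y₂ Y₃ X₂' X₃' Y₂' Y₃' : D}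
    (φ₁ : X₂ ⊗ X₃ ⟶ X₂' ⊗ X₃') (φ₂ : Y₂ ⊗ Y₃ ⟶ Y₂' ⊗ Y₃')
    (ψ : (X₂ ⊗ Y₂) ⊗ (X₃ ⊗ Y₃) ⟶ (X₂' ⊗ Y₂') ⊗ (X₃' ⊗ Y₃'))
    (h : (φ₁ ⊗ₘ φ₂) ≫ tensorμ X₂' X₃' Y₂' Y₃' = tensorμ X₂ X₃ Y₂ Y₃ ≫ ψ) :
    (whiskerLeftAssoc X₁ φ₁ ⊗ₘ whiskerLeftAssoc Y₁ φ₂) ≫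
        tensorμ (X₁ ⊗ X₂') X₃' (Y₁ ⊗ Y₂') Y₃' ≫ (tensorμ X₁ X₂' Y₁ Y₂' ▷ (X₃' ⊗ Y₃')) =
      tensorμ (X₁ ⊗ X₂) X₃ (Y₁ ⊗ Y₂) Y₃ ≫ (tensorμ X₁ X₂ Y₁ Y₂ ▷ (X₃ ⊗ Y₃)) ≫
        whiskerLeftAssoc (X₁ ⊗ Y₁) ψ := by
  have nat : (X₁ ◁ φ₁ ⊗ₘ Y₁ ◁ φ₂) ≫ tensorμ X₁ (X₂' ⊗ X₃') Y₁ (Y₂' ⊗ Y₃') =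
      tensorμ X₁ (X₂ ⊗ X₃) Y₁ (Y₂ ⊗ Y₃) ≫ (X₁ ⊗ Y₁) ◁ (φ₁ ⊗ₘ φ₂) := by
    simpa using tensorμ_natural (𝟙 X₁) φ₁ (𝟙 Y₁) φ₂
  rw [← cancel_mono (α_ (X₁ ⊗ Y₁) (X₂' ⊗ Y₂') (X₃' ⊗ Y₃')).hom]
  simp only [whiskerLeftAssoc, Category.assoc, Iso.inv_hom_id, Category.comp_id,
    associator_monoidal, associator_monoidal_assoc]
  rw [← MonoidalCategory.whiskerLeft_comp, ← h, MonoidalCategory.whiskerLeft_comp,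
    ← reassoc_of% nat]
  simp only [tensorHom_comp_tensorHom_assoc, Category.assoc, Iso.inv_hom_id, Category.comp_id]

theorem whiskerRight_tensorHom_comp_tensorμ {X₁ X₂ Y₁ Y₂ : D} (f₁ : X₁ ⟶ Y₁) (f₂ : X₂ ⟶ Y₂)
    (Z₁ Z₂ : D) :
    (f₁ ▷ Z₁ ⊗ₘ f₂ ▷ Z₂) ≫ tensorμ Y₁ Z₁ Y₂ Z₂ = tensorμ X₁ Z₁ X₂ Z₂ ≫ (f₁ ⊗ₘ f₂) ▷ (Z₁ ⊗ Z₂) := by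
  simpa using tensorμ_natural f₁ (𝟙 Z₁) f₂ (𝟙 Z₂)

end Braided

theorem CPform_eq_whiskerLeftAssoc {A B X : C} (f : A ⟶ X ⊗ B) :
    CPform f = f ▷ B ≫ whiskerLeftAssoc X (β_ B B).hom ≫ dag f ▷ B := by
  simp only [CPform, whiskerLeftAssoc, Category.assoc]

/-- The tensor product of two CP-forms is again a CP-form: there is a Kraus morphism
`h : A ⊗ A' ⟶ (X ⊗ X') ⊗ (B ⊗ B')` whose CP-form equals the interleaved tensor
`CPform f ⊗ CPform g`, up to the symmetry/associativity interchange `tensorμ`.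
(This is the key step showing `CP(C)` is a symmetric monoidal category.) -/
theorem cp_tensor_is_cp_form {A B X A' B' X' : C} (f : A ⟶ X ⊗ B) (g : A' ⟶ X' ⊗ B') :
    ∃ h : A ⊗ A' ⟶ (X ⊗ X') ⊗ (B ⊗ B'),
      (CPform f ⊗ₘ CPform g) ≫ tensorμ A B A' B' = tensorμ A B A' B' ≫ CPform h := by
  refine ⟨(f ⊗ₘ g) ≫ tensorμ X B X' B', ?_⟩
  have swaps := whiskerLeftAssoc_tensorHom_comp_tensorμ (X₁ := X) (Y₁ := X')
    (β_ B B).hom (β_ B' B').hom _ (SymmetricCategory.tensorμ_braid_swap B B').symm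
  simp only [CPform_eq_whiskerLeftAssoc, dag_comp, DaggerSMC.dag_tensorμ, DaggerSMC.dag_tensor,
    ← tensorHom_comp_tensorHom, Category.assoc, whiskerRight_tensorHom_comp_tensorμ,
    comp_whiskerRight]
  rw [← reassoc_of% whiskerRight_tensorHom_comp_tensorμ, ← reassoc_of% swaps,
    ← comp_whiskerRight_assoc, tensorμ_tensorδ, id_whiskerRight, Category.id_comp]
end

section
/- (Dixmier) Every normal unital *-homomorphism φ : B(H) → B(K) between bounded operator algebras on Hilbert spaces factors as φ = φ₃ ∘ φ₂ ∘ φ₁, where φ₁ : B(H) → B(H ⊗ H') is an ampliation f ↦ f ⊗ id for some Hilbert space H', φ₂ : B(H ⊗ H') → B(K') is induction f ↦ p f p onto a closed subspace K' ⊆ H ⊗ H' with projection p, and φ₃ : B(K') → B(K) is a spatial isomorphism f ↦ u† f u for a unitary u : K → K'. -/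
open ContinuousLinearMap

noncomputable section

variable {H K L : Type} 

/-- Positivity of an `n × n` matrix of operators: `M = B† B` for some matrix `B`.
(An element of a `C*`-algebra is positive when it is of the form `b* b`.) -/
def MatPos {n : ℕ} {E : Type} [NormedAddCommGroup E] [InnerProductSpace ℂ E]
    [CompleteSpace E] (M : Matrix (Fin n) (Fin n) (E →L[ℂ] E)) : Prop :=
  ∃ B : Matrix (Fin n) (Fin n) (E →L[ℂ] E), M = B.conjTranspose * B

variable [NormedAddCommGroup H] [InnerProductSpace ℂ H] [CompleteSpace H]
variable [NormedAddCommGroup K] [InnerProductSpace ℂ K] [CompleteSpace K]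

/-- A map `B(H) → B(K)` is completely positive when all of its matrix amplifications
`φ ⊗ id_{M_n}` send positive elements to positive elements. -/
def CompletelyPositive (φ : (H →L[ℂ] H) → (K →L[ℂ] K)) : Prop :=
  ∀ (n : ℕ) (M : Matrix (Fin n) (Fin n) (H →L[ℂ] H)),
    MatPos M → MatPos (M.map φ)

/-- An operator is a (self-adjoint idempotent) projection. -/
def IsProjectionOp {E : Type} [NormedAddCommGroup E] [InnerProductSpace ℂ E]
    [CompleteSpace E] (p : E →L[ℂ] E) : Prop :=
  ContinuousLinearMap.adjoint p = p ∧ p ∘L p = p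

/-- The operator order: `a ≤ b` when `b - a` is positive, i.e. of the form `c† c`. -/
def OpLE {E : Type} [NormedAddCommGroup E] [InnerProductSpace ℂ E]
    [CompleteSpace E] (a b : E →L[ℂ] E) : Prop :=
  ∃ c : E →L[ℂ] E, b - a = ContinuousLinearMap.adjoint c ∘L c

/-- `s` is the supremum of the family `p` in the operator order. -/
def IsOpLUB {ι E : Type} [NormedAddCommGroup E] [InnerProductSpace ℂ E]
    [CompleteSpace E] (p : ι → (E →L[ℂ] E)) (s : E →L[ℂ] E) : Prop :=
  (∀ i, OpLE (p i) s) ∧ ∀ u, (∀ i, OpLE (p i) u) → OpLE s u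

/-- A map `B(H) → B(K)` is normal when it preserves suprema of increasing
(upward directed) nets of projections; this is equivalent to ultraweak
(σ-weak) continuity. -/
def NormalMap (φ : (H →L[ℂ] H) → (K →L[ℂ] K)) : Prop :=
  ∀ (ι : Type) (p : ι → (H →L[ℂ] H)) (s : H →L[ℂ] H),
    (∀ i, IsProjectionOp (p i)) → Directed OpLE p → IsOpLUB p s →
      IsOpLUB (fun i => φ (p i)) (φ s)

/-- The Hilbert space tensor product of `E` and `F`, presented abstractly: a Hilbert
space `W` together with a bilinear map `p : E → F → W` whose image consists of the
elementary tensors: inner products multiply, and the span of the image is dense. -/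
structure HilbertTensor (E F W : Type) [NormedAddCommGroup E] [InnerProductSpace ℂ E]
    [NormedAddCommGroup F] [InnerProductSpace ℂ F]
    [NormedAddCommGroup W] [InnerProductSpace ℂ W] where
  p : E →ₗ[ℂ] F →ₗ[ℂ] W
  inner_p : ∀ (x x' : E) (y y' : F),
    (inner ℂ (p x y) (p x' y') : ℂ) = (inner ℂ x x' : ℂ) * (inner ℂ y y' : ℂ)
  dense_span : Dense (Submodule.span ℂ
    (Set.range fun xy : E × F => p xy.1 xy.2) : Set W)

/-- `T` is the amplification `f ↦ f ⊗ id` along the Hilbert tensor product `J`. -/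
def IsAmpl {E F W : Type} [NormedAddCommGroup E] [InnerProductSpace ℂ E]
    [NormedAddCommGroup F] [InnerProductSpace ℂ F]
    [NormedAddCommGroup W] [InnerProductSpace ℂ W]
    (J : HilbertTensor E F W) (T : (E →L[ℂ] E) → (W →L[ℂ] W)) : Prop :=
  ∀ (f : E →L[ℂ] E) (x : E) (y : F), T f (J.p x y) = J.p (f x) y

/-- A bundled complex Hilbert space. -/
structure HilbPre where
  carrier : Type
  [ng : NormedAddCommGroup carrier]
  [ip : InnerProductSpace ℂ carrier]
  [cs : CompleteSpace carrier]

attribute [instance] HilbPre.ng HilbPre.ip HilbPre.cs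

/-! Fix a unit vector `e ∈ H` and put `q = φ(|e⟩⟨e|)`. The map `(x, k) ↦ φ(|x⟩⟨e|) k` on
`H × qK` multiplies inner products, because `φ(|x⟩⟨e|)† φ(|x'⟩⟨e|) = ⟪x, x'⟫ q`, and it
intertwines `f ⊗ 1` with `φ f`. Its image contains the range of every `φ(|x⟩⟨y|)
= φ(|x⟩⟨e|) φ(|e⟩⟨y|)`, so the projection onto the closure of its span dominates `φ` of every
finite partial sum of a Hilbert basis of `H`; these sums are projections increasing to `1`, and
normality gives that this projection dominates `φ 1 = 1`. So `K` itself is `H ⊗ qK` with `φ` the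
ampliation, and `P = 1`, `u = 1` complete the factorization. -/

open InnerProductSpace Filter Topology

section OperatorOrder

variable {E : Type} [NormedAddCommGroup E] [InnerProductSpace ℂ E] [CompleteSpace E]

theorem opLE_eq_le : (OpLE : (E →L[ℂ] E) → (E →L[ℂ] E) → Prop) = (· ≤ ·) := by
  ext a b
  rw [OpLE, ← sub_nonneg, CStarAlgebra.nonneg_iff_eq_star_mul_self]
  simp only [star_eq_adjoint, mul_def]

theorem isProjectionOp_iff {p : E →L[ℂ] E} : IsProjectionOp p ↔ IsStarProjection p := by
  rw [IsProjectionOp, isStarProjection_iff', ← star_eq_adjoint, ← mul_def, and_comm]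

theorem isOpLUB_iff {ι : Type} {p : ι → E →L[ℂ] E} {s : E →L[ℂ] E} :
    IsOpLUB p s ↔ IsLUB (Set.range p) s := by
  simp [IsOpLUB, IsLUB, IsLeast, upperBounds, lowerBounds, opLE_eq_le]

end OperatorOrder

theorem NormalMap.isLUB_map {φ : (H →L[ℂ] H) → (K →L[ℂ] K)} (hφ : NormalMap φ) {ι : Type}
    {p : ι → H →L[ℂ] H} {s : H →L[ℂ] H} (hp : ∀ i, IsStarProjection (p i))
    (hdir : Directed (· ≤ ·) p) (hs : IsLUB (Set.range p) s) :
    IsLUB (Set.range (φ ∘ p)) (φ s) := by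
  rw [← opLE_eq_le] at hdir
  rw [← isOpLUB_iff] at hs ⊢
  exact hφ ι p s (fun i => isProjectionOp_iff.2 (hp i)) hdir hs

namespace HilbertBasis

section RCLike

variable {ι 𝕜 E : Type*} [RCLike 𝕜] [NormedAddCommGroup E] [InnerProductSpace 𝕜 E]
  (b : HilbertBasis ι 𝕜 E)

def partialProjection (F : Finset ι) : E →L[𝕜] E :=
  ∑ i ∈ F, rankOne 𝕜 (b i) (b i)

theorem partialProjection_apply (F : Finset ι) (x : E) :
    b.partialProjection F x = ∑ i ∈ F, b.repr x i • b i := by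
  simp [partialProjection, b.repr_apply_apply]

theorem tendsto_partialProjection_apply (x : E) :
    Tendsto (fun F => b.partialProjection F x) atTop (𝓝 x) := by
  simp only [partialProjection_apply]
  exact b.hasSum_repr x

theorem partialProjection_apply_of_mem {F : Finset ι} {j : ι} (hj : j ∈ F) :
    b.partialProjection F (b j) = b j := by
  classical
  simp [partialProjection, orthonormal_iff_ite.1 b.orthonormal, hj]

theorem partialProjection_mul_of_subset {F G : Finset ι} (h : F ⊆ G) :
    b.partialProjection G * b.partialProjection F = b.partialProjection F := by
  ext x
  rw [mul_apply_eq_comp, b.partialProjection_apply F, map_sum]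
  exact Finset.sum_congr rfl fun j hj => by rw [map_smul, b.partialProjection_apply_of_mem (h hj)]

variable [CompleteSpace E]

theorem isStarProjection_partialProjection (F : Finset ι) :
    IsStarProjection (b.partialProjection F) where
  isIdempotentElem := b.partialProjection_mul_of_subset subset_rfl
  isSelfAdjoint := by
    simp [partialProjection, IsSelfAdjoint, star_eq_adjoint]

end RCLike

section Complex

variable {ι E : Type*} [NormedAddCommGroup E] [InnerProductSpace ℂ E] [CompleteSpace E]
  (b : HilbertBasis ι ℂ E)

theorem monotone_partialProjection : Monotone b.partialProjection := fun _ _ h =>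
  (b.isStarProjection_partialProjection _).le_of_mul_eq_right
    (b.isStarProjection_partialProjection _) (b.partialProjection_mul_of_subset h)

theorem isLUB_partialProjection : IsLUB (Set.range b.partialProjection) 1 := by
  refine ⟨Set.forall_mem_range.2 fun F => (b.isStarProjection_partialProjection F).le_one,
    fun u hu => ?_⟩
  rw [mem_upperBounds, Set.forall_mem_range] at hu
  have hu_sa : IsSelfAdjoint u := IsSelfAdjoint.of_nonneg <| by
    simpa [partialProjection] using hu ∅
  refine ⟨(hu_sa.sub (.one _)).isSymmetric, fun x => ?_⟩
  have hlim : Tendsto (fun F => (u - b.partialProjection F).reApplyInnerSelf x) atTop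
      (𝓝 ((u - 1).reApplyInnerSelf x)) := by
    simp only [reApplyInnerSelf_apply, sub_apply]
    exact ((RCLike.continuous_re.comp (continuous_id.inner continuous_const)).tendsto _).comp
      ((b.tendsto_partialProjection_apply x).const_sub (u x))
  exact ge_of_tendsto hlim (Eventually.of_forall fun F => (hu F).2 x)

end Complex

end HilbertBasis

theorem rankOne_mul_rankOne_of_norm_eq_one {𝕜 E : Type*} [RCLike 𝕜] [NormedAddCommGroup E]
    [InnerProductSpace 𝕜 E] {e : E} (he : ‖e‖ = 1) (x y : E) :
    rankOne 𝕜 x e * rankOne 𝕜 e y = rankOne 𝕜 x y := by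
  simp [mul_def, rankOne_comp_rankOne, inner_self_eq_norm_sq_to_K, he]

namespace StarAlgHom

variable (φ : (H →L[ℂ] H) →⋆ₐ[ℂ] (K →L[ℂ] K))

theorem eq_top_of_forall_map_rankOne_apply_mem (hφ : NormalMap φ) (U : Submodule ℂ K)
    [U.HasOrthogonalProjection] (hU : ∀ x y z, φ (rankOne ℂ x y) z ∈ U) : U = ⊤ := by
  obtain ⟨ι, b, -⟩ := exists_hilbertBasis ℂ H
  have hproj (F : Finset ι) : φ (b.partialProjection F) ≤ U.starProjection := by
    refine ((b.isStarProjection_partialProjection F).map φ).le_of_mul_eq_right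
      isStarProjection_starProjection ?_
    ext z
    rw [mul_apply_eq_comp, Submodule.starProjection_eq_self_iff, HilbertBasis.partialProjection,
      map_sum, sum_apply]
    exact U.sum_mem fun i _ => hU _ _ z
  have hlub := hφ.isLUB_map b.isStarProjection_partialProjection
    b.monotone_partialProjection.directed_le b.isLUB_partialProjection
  have h1 : (⊤ : Submodule ℂ K).starProjection ≤ U.starProjection := by
    rw [Submodule.starProjection_top', ← map_one φ]
    exact hlub.2 (Set.forall_mem_range.2 hproj)
  exact top_le_iff.1 (Submodule.starProjection_le_starProjection_iff.1 h1)

variable (e : H)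

/-- The range of the projection `φ(|e⟩⟨e|)`, taken as its fixed space so that it is visibly
closed. -/
def multiplicitySpace : Submodule ℂ K :=
  (φ (rankOne ℂ e e)).eqLocus 1

theorem mem_multiplicitySpace {k : K} :
    k ∈ φ.multiplicitySpace e ↔ φ (rankOne ℂ e e) k = k := by
  simp [multiplicitySpace]

instance : CompleteSpace (φ.multiplicitySpace e) :=
  (isClosed_eqLocus (φ (rankOne ℂ e e)) 1).completeSpace_coe

def tensorMap : H →ₗ[ℂ] φ.multiplicitySpace e →ₗ[ℂ] K :=
  LinearMap.mk₂ ℂ (fun x k => φ (rankOne ℂ x e) k)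
    (fun x x' k => by simp only [map_add, add_apply])
    (fun c x k => by simp only [map_smul, smul_apply])
    (fun x k k' => by simp only [Submodule.coe_add, map_add])
    (fun c x k => by simp only [Submodule.coe_smul, map_smul])

theorem tensorMap_apply (x : H) (k : φ.multiplicitySpace e) :
    φ.tensorMap e x k = φ (rankOne ℂ x e) k := rfl

theorem map_apply_tensorMap (f : H →L[ℂ] H) (x : H) (k : φ.multiplicitySpace e) :
    φ f (φ.tensorMap e x k) = φ.tensorMap e (f x) k := by
  rw [tensorMap_apply, tensorMap_apply, ← mul_apply_eq_comp, ← map_mul, mul_def, comp_rankOne]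

variable {e}

theorem map_rankOne_apply_mem_multiplicitySpace (he : ‖e‖ = 1) (y : H) (z : K) :
    φ (rankOne ℂ e y) z ∈ φ.multiplicitySpace e := by
  rw [mem_multiplicitySpace, ← mul_apply_eq_comp, ← map_mul,
    rankOne_mul_rankOne_of_norm_eq_one he]

theorem map_rankOne_apply_eq_tensorMap (he : ‖e‖ = 1) (x y : H) (z : K) :
    φ (rankOne ℂ x y) z =
      φ.tensorMap e x ⟨φ (rankOne ℂ e y) z, φ.map_rankOne_apply_mem_multiplicitySpace he y z⟩ := by
  rw [tensorMap_apply, ← mul_apply_eq_comp, ← map_mul, rankOne_mul_rankOne_of_norm_eq_one he]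

theorem inner_tensorMap (x x' : H) (k k' : φ.multiplicitySpace e) :
    inner ℂ (φ.tensorMap e x k) (φ.tensorMap e x' k') = inner ℂ x x' * inner ℂ k k' := by
  have hk' := (φ.mem_multiplicitySpace e).1 k'.2
  rw [tensorMap_apply, tensorMap_apply, ← adjoint_inner_right, ← star_eq_adjoint, ← map_star,
    star_eq_adjoint, adjoint_rankOne, ← mul_apply_eq_comp, ← map_mul, mul_def,
    rankOne_comp_rankOne, map_smul, smul_apply, hk', inner_smul_right, Submodule.coe_inner]

theorem dense_span_tensorMap (hφ : NormalMap φ) (he : ‖e‖ = 1) :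
    Dense (Submodule.span ℂ (Set.range fun xk : H × φ.multiplicitySpace e =>
      φ.tensorMap e xk.1 xk.2) : Set K) := by
  set S := Submodule.span ℂ (Set.range fun xk : H × φ.multiplicitySpace e =>
    φ.tensorMap e xk.1 xk.2)
  have : CompleteSpace S.topologicalClosure := S.isClosed_topologicalClosure.completeSpace_coe
  rw [Submodule.dense_iff_topologicalClosure_eq_top]
  refine φ.eq_top_of_forall_map_rankOne_apply_mem hφ _ fun x y z => ?_
  rw [φ.map_rankOne_apply_eq_tensorMap he]
  exact S.le_topologicalClosure (Submodule.subset_span ⟨(x, _), rfl⟩)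

def hilbertTensor (hφ : NormalMap φ) (he : ‖e‖ = 1) :
    HilbertTensor H (φ.multiplicitySpace e) K where
  p := φ.tensorMap e
  inner_p := φ.inner_tensorMap
  dense_span := φ.dense_span_tensorMap hφ he

theorem isAmpl_hilbertTensor (hφ : NormalMap φ) (he : ‖e‖ = 1) :
    IsAmpl (φ.hilbertTensor hφ he) φ :=
  φ.map_apply_tensorMap e

theorem exists_hilbertTensor_isAmpl (hφ : NormalMap φ) :
    ∃ (H' : HilbPre) (J : HilbertTensor H H'.carrier K), IsAmpl J φ := by
  rcases subsingleton_or_nontrivial H with hH | hH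
  · have h1 : (1 : K →L[ℂ] K) = 0 := by
      rw [← map_one φ, Subsingleton.elim (1 : H →L[ℂ] H) 0, map_zero]
    have : Subsingleton K := ⟨fun a b => by simpa [sub_eq_zero] using congr($h1 (a - b))⟩
    refine ⟨⟨K⟩, ⟨0, fun x x' _ _ => by simp [Subsingleton.elim x 0], ?_⟩,
      fun _ _ _ => Subsingleton.elim _ _⟩
    rw [Subsingleton.elim (Submodule.span ℂ _) ⊤]
    exact dense_univ
  · obtain ⟨e, he⟩ := exists_norm_eq H zero_le_one
    exact ⟨⟨φ.multiplicitySpace e⟩, φ.hilbertTensor hφ he, φ.isAmpl_hilbertTensor hφ he⟩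

end StarAlgHom

/-- (Dixmier) Every normal unital `*`-homomorphism `φ : B(H) → B(K)` factors as an
ampliation `f ↦ f ⊗ id_{H'}` (the map `T` along the Hilbert tensor product
`W = H ⊗ H'`), followed by induction `x ↦ p x p` onto a closed subspace `K' ⊆ W`
(with projection `p = P`), followed by a spatial isomorphism `x ↦ u† x u` for a
unitary `u : K → K'` (an isometry of `K` into `W` with range `K'`, so `u† u = 1`
and `u u† = P`). -/
theorem dixmier (φ : (H →L[ℂ] H) →ₗ[ℂ] (K →L[ℂ] K))
    (hmul : ∀ a b : H →L[ℂ] H, φ (a ∘L b) = φ a ∘L φ b)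
    (hstar : ∀ a : H →L[ℂ] H, φ (ContinuousLinearMap.adjoint a) =
      ContinuousLinearMap.adjoint (φ a))
    (hunit : φ 1 = 1)
    (hnormal : NormalMap (fun f => φ f)) :
    ∃ (H' W : HilbPre) (J : HilbertTensor H H'.carrier W.carrier)
      (T : (H →L[ℂ] H) → (W.carrier →L[ℂ] W.carrier))
      (P : W.carrier →L[ℂ] W.carrier) (u : K →L[ℂ] W.carrier),
      IsAmpl J T ∧ IsProjectionOp P ∧
      ContinuousLinearMap.adjoint u ∘L u = 1 ∧
      u ∘L ContinuousLinearMap.adjoint u = P ∧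
      ∀ f : H →L[ℂ] H,
        φ f = ContinuousLinearMap.adjoint u ∘L (P ∘L (T f ∘L (P ∘L u))) := by
  let ψ : (H →L[ℂ] H) →⋆ₐ[ℂ] (K →L[ℂ] K) :=
    { φ with
      map_one' := hunit
      map_mul' := hmul
      map_zero' := map_zero φ
      commutes' := fun c => by simp [Algebra.algebraMap_eq_smul_one, hunit]
      map_star' := hstar }
  obtain ⟨H', J, hJ⟩ := ψ.exists_hilbertTensor_isAmpl hnormal
  refine ⟨H', ⟨K⟩, J, ψ, 1, 1, hJ, isProjectionOp_iff.2 (.one _), ?_, ?_, fun f => ?_⟩ <;>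
    simp [← star_eq_adjoint, ← mul_def, ψ]
end
end

section
/- The map ξ from CP(C) to Ĉ sending the CP-form of a Kraus morphism f : A → C ⊗ B to (⊤_C ⊗ id_B) ∘ f preserves composition: ξ of the CP-composite of Kraus morphisms f : A → C ⊗ B and g : B → D ⊗ E equals ((⊤_D ⊗ id) ∘ g) ∘ ((⊤_C ⊗ id) ∘ f) in Ĉ. -/
open CategoryTheory MonoidalCategory

universe v u

open Dagger

variable {C : Type u} [Category.{v} C] [MonoidalCategory C] [SymmetricCategory C] [DaggerSMC C]

/-- Discarding a Kraus output into the environment: `(⊤_X ⊗ id_B) ∘ f`. -/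
def xi (e : ∀ A : C, A ⟶ 𝟙_ C) {A B X : C} (f : A ⟶ X ⊗ B) : A ⟶ B :=
  f ≫ (e X ▷ B) ≫ (λ_ B).hom

section Discard

variable {C : Type*} [Category C] [MonoidalCategory C] (e : ∀ A : C, A ⟶ 𝟙_ C)

theorem xi_comp_whiskerLeft {A B B' X : C} (f : A ⟶ X ⊗ B) (h : B ⟶ B') :
    xi e (f ≫ X ◁ h) = xi e f ≫ h := by
  simp only [xi, Category.assoc, whisker_exchange_assoc, id_whiskerLeft,
    Iso.inv_hom_id, Category.comp_id]

/-- Axiom (a), `⊤_{X ⊗ D} = ⊤_X ⊗ ⊤_D`, lets the environment of a composite be discarded one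
factor at a time. -/
theorem xi_comp_associator_inv {A X D E : C}
    (he : (e X ⊗ₘ e D) ≫ (λ_ (𝟙_ C)).hom = e (X ⊗ D)) (h : A ⟶ X ⊗ (D ⊗ E)) :
    xi e (h ≫ (α_ X D E).inv) = xi e (h ≫ X ◁ (e D ▷ E ≫ (λ_ E).hom)) := by
  simp only [xi, ← he, Category.assoc, MonoidalCategory.tensorHom_def, comp_whiskerRight]
  rw [← associator_inv_naturality_left_assoc, whisker_exchange_assoc,
    ← associator_inv_naturality_middle_assoc]
  simp

end Discard

theorem xi_preserves_composition_general
    (e : ∀ A : C, A ⟶ 𝟙_ C)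
    (ha2 : ∀ A B : C, (e A ⊗ₘ e B) ≫ (λ_ (𝟙_ C)).hom = e (A ⊗ B)) :
    ∀ {A B X D E : C} (f : A ⟶ X ⊗ B) (g : B ⟶ D ⊗ E),
      xi e (f ≫ (X ◁ g) ≫ (α_ X D E).inv) = xi e f ≫ xi e g := by
  intro A B X D E f g
  rw [← Category.assoc, xi_comp_associator_inv e (ha2 X D), Category.assoc, ← whiskerLeft_comp]
  exact xi_comp_whiskerLeft e f (xi e g)

/-- The map `ξ` sending the CP-form of a Kraus morphism `f : A ⟶ X ⊗ B` to
`(⊤_X ⊗ id_B) ∘ f` preserves composition: `ξ` of the CP-composite of Kraus morphisms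
`f : A ⟶ X ⊗ B` and `g : B ⟶ D ⊗ E` (whose Kraus morphism is `(id_X ⊗ g) ∘ f`, up to
associativity) equals `((⊤_D ⊗ id) ∘ g) ∘ ((⊤_X ⊗ id) ∘ f)`, given axiom (a) of
environment structures. -/
theorem xi_preserves_composition
    (e : ∀ A : C, A ⟶ 𝟙_ C)
    (ha1 : e (𝟙_ C) = 𝟙 (𝟙_ C))
    (ha2 : ∀ A B : C, (e A ⊗ₘ e B) ≫ (λ_ (𝟙_ C)).hom = e (A ⊗ B)) :
    ∀ {A B X D E : C} (f : A ⟶ X ⊗ B) (g : B ⟶ D ⊗ E),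
      xi e (f ≫ (X ◁ g) ≫ (α_ X D E).inv) = xi e f ≫ xi e g :=
  xi_preserves_composition_general e ha2
end

section
/- The canonical functor C → CP(C) on the dagger symmetric monoidal category Hilb, which identifies continuous linear maps f and g whenever their CP-forms agree, identifies exactly global phases: for bounded linear maps f, g : H → K between complex Hilbert spaces, the maps x ↦ f x f† and x ↦ g x g† on B(H) are equal if and only if f = λ g for some complex number λ with |λ| = 1, or f = g = 0. -/
open ContinuousLinearMap

namespace ContinuousLinearMap

open InnerProductSpace

variable {𝕜 E F : Type*} [RCLike 𝕜]
  [NormedAddCommGroup E] [InnerProductSpace 𝕜 E] [CompleteSpace E]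
  [NormedAddCommGroup F] [InnerProductSpace 𝕜 F] [CompleteSpace F]

theorem comp_rankOne_comp_adjoint (f : E →L[𝕜] F) (x y : E) :
    f ∘L (rankOne 𝕜 x y ∘L adjoint f) = rankOne 𝕜 (f x) (f y) := by
  rw [rankOne_comp, comp_rankOne, adjoint_adjoint]

theorem smul_comp_comp_adjoint_smul (c : 𝕜) (g : E →L[𝕜] F) (x : E →L[𝕜] E) :
    (c • g) ∘L (x ∘L adjoint (c • g)) = ((‖c‖ ^ 2 : ℝ) : 𝕜) • (g ∘L (x ∘L adjoint g)) := by
  rw [map_smulₛₗ, comp_smulₛₗ, smul_comp, comp_smul, smul_smul, RingHom.id_apply, RCLike.mul_conj]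
  norm_cast

theorem self_comp_adjoint_eq_zero_iff {g : E →L[𝕜] F} : g ∘L adjoint g = 0 ↔ g = 0 := by
  simpa using adjoint_comp_self_eq_zero_iff (A := adjoint g)

/-- Testing against the rank-one operators `rankOne w u` gives
`⟪f u, f u⟫ • f w = ⟪g u, f u⟫ • g w`, so any `u` with `f u ≠ 0` fixes the scalar. -/
theorem exists_eq_smul_of_comp_comp_adjoint_eq {f g : E →L[𝕜] F} (hf : f ≠ 0)
    (h : ∀ x : E →L[𝕜] E, f ∘L (x ∘L adjoint f) = g ∘L (x ∘L adjoint g)) :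
    ∃ c : 𝕜, f = c • g := by
  obtain ⟨u, hu⟩ : ∃ u, f u ≠ 0 := by
    by_contra! hfu
    exact hf (ext hfu)
  have hfu : (inner 𝕜 (f u) (f u) : 𝕜) ≠ 0 := inner_self_ne_zero.mpr hu
  refine ⟨(inner 𝕜 (f u) (f u))⁻¹ * inner 𝕜 (g u) (f u), ext fun w => ?_⟩
  have hw : inner 𝕜 (f u) (f u) • f w = inner 𝕜 (g u) (f u) • g w := by
    simpa [comp_rankOne_comp_adjoint] using congr($(h (rankOne 𝕜 w u)) (f u))
  rw [smul_apply, mul_smul, ← hw, inv_smul_smul₀ hfu]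

end ContinuousLinearMap

/-- The canonical functor `Hilb → CP(Hilb)` identifies exactly global phases: for
bounded linear maps `f, g : H → K` between complex Hilbert spaces, the induced maps
`x ↦ f x f†` and `x ↦ g x g†` on `B(H)` are equal if and only if `f = λ g` for some
complex number `λ` with `|λ| = 1`, or `f = g = 0`. -/
theorem cp_canonical_functor_identifies_global_phases
    {H K : Type} [NormedAddCommGroup H] [InnerProductSpace ℂ H] [CompleteSpace H]
    [NormedAddCommGroup K] [InnerProductSpace ℂ K] [CompleteSpace K]
    (f g : H →L[ℂ] K) :
    (∀ x : H →L[ℂ] H,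
        f ∘L (x ∘L ContinuousLinearMap.adjoint f) =
        g ∘L (x ∘L ContinuousLinearMap.adjoint g)) ↔
    ((∃ lam : ℂ, ‖lam‖ = 1 ∧ f = lam • g) ∨ (f = 0 ∧ g = 0)) := by
  constructor
  · intro h
    by_cases hf : f = 0
    · refine .inr ⟨hf, self_comp_adjoint_eq_zero_iff.mp ?_⟩
      simpa [hf] using (h (.id ℂ H)).symm
    · obtain ⟨c, rfl⟩ := exists_eq_smul_of_comp_comp_adjoint_eq hf h
      have hg : g ∘L adjoint g ≠ 0 := by
        rw [Ne, self_comp_adjoint_eq_zero_iff]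
        rintro rfl
        simp at hf
      have hc : ((‖c‖ ^ 2 : ℝ) : ℂ) = 1 := by
        have := h (.id ℂ H)
        rw [smul_comp_comp_adjoint_smul, id_comp] at this
        exact smul_left_injective ℂ hg (this.trans (one_smul ℂ _).symm)
      norm_cast at hc
      exact .inl ⟨c, (pow_eq_one_iff_of_nonneg (norm_nonneg c) two_ne_zero).mp hc, rfl⟩
  · rintro (⟨c, hc, rfl⟩ | ⟨rfl, rfl⟩) x
    · rw [smul_comp_comp_adjoint_smul, hc]
      simp
    · simp
end
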